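/- The zeta polynomial of η_{12}(x,y) = x^{12} − 11x^9y^3 − (11/8)x^3y^9 − (1/64)y^{12} for q = 3/2 is P_{12}(T) = (3T^2 − 2)(27T^6 + 27T^5 + 36T^4 + 26T^3 + 24T^2 + 12T + 8)/160. -/

import Mathlib

/-!
Since `y(1 − T) + xT = y + (x − y)T`, the binomial theorem makes every coefficient of
`P₁₂(T)·(y(1 − T) + xT)¹²` explicit, and the identity becomes a polynomial identity in `x, y`.
-/

open Polynomial

section

variable {R : Type*} [CommRing R]

lemma C_mul_one_sub_X_add_C_mul_X (x y : R) :
    C y * (1 - X) + C x * X = C y + C (x - y) * X := by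
  rw [C_sub]; ring

lemma coeff_C_add_C_mul_X_pow (a b : R) (n k : ℕ) :
    ((C a + C b * X) ^ n).coeff k = n.choose k * a ^ (n - k) * b ^ k := by
  have hterm (m : ℕ) : (C b * X) ^ m * C a ^ (n - m) * (n.choose m : R[X]) =
      C (n.choose m * a ^ (n - m) * b ^ m) * X ^ m := by
    simp only [C_mul, C_pow, C_eq_natCast]; ring
  rw [add_comm, add_pow, finsetSum_coeff]
  simp only [hterm, coeff_C_mul_X_pow, Finset.sum_ite_eq, Finset.mem_range]
  split_ifs with hk
  · rfl
  · simp [Nat.choose_eq_zero_of_lt (by omega : n < k)]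

end

/-- The zeta polynomial of `η_{12}` for `q = 3/2` is
`P_{12}(T) = (3T² − 2)(27T⁶ + 27T⁵ + 36T⁴ + 26T³ + 24T² + 12T + 8)/160`:
it has degree `≤ 12 − 3` and the coefficient of `T⁹` in
`(P_{12}(T)/((1−T)(1−(3/2)T)))·(y(1−T)+xT)^{12}` equals `(η_{12}(x,y) − x^{12})/(3/2 − 1)`. -/
theorem zeta_polynomial_eta12 :
    ((C (3 : ℂ) * X ^ 2 - C 2)
        * (C (27 : ℂ) * X ^ 6 + C 27 * X ^ 5 + C 36 * X ^ 4 + C 26 * X ^ 3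
            + C 24 * X ^ 2 + C 12 * X + C 8) * C (1 / 160 : ℂ)).natDegree ≤ 12 - 3 ∧
    ∀ x y : ℂ,
      (∑ j ∈ Finset.range 10,
          (((C (3 : ℂ) * X ^ 2 - C 2)
              * (C (27 : ℂ) * X ^ 6 + C 27 * X ^ 5 + C 36 * X ^ 4 + C 26 * X ^ 3
                  + C 24 * X ^ 2 + C 12 * X + C 8) * C (1 / 160 : ℂ))
              * (C y * (1 - X) + C x * X) ^ 12).coeff j
            * (((3 / 2 : ℂ)) ^ (10 - j) - 1) / ((3 / 2 : ℂ) - 1))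
      = ((x ^ 12 - 11 * x ^ 9 * y ^ 3 - (11 / 8) * x ^ 3 * y ^ 9 - (1 / 64) * y ^ 12)
          - x ^ 12) / ((3 / 2 : ℂ) - 1) := by
  have hP : (C (3 : ℂ) * X ^ 2 - C 2)
        * (C (27 : ℂ) * X ^ 6 + C 27 * X ^ 5 + C 36 * X ^ 4 + C 26 * X ^ 3
            + C 24 * X ^ 2 + C 12 * X + C 8) * C (1 / 160 : ℂ) =
      C (1 / 160) * (C 81 * X ^ 8 + C 81 * X ^ 7 + C 54 * X ^ 6 + C 24 * X ^ 5
        - C 16 * X ^ 3 - C 24 * X ^ 2 - C 24 * X - C 16) := by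
    simp only [map_ofNat]; ring
  refine ⟨by rw [hP]; compute_degree!, fun x y => ?_⟩
  rw [hP, C_mul_one_sub_X_add_C_mul_X]
  simp only [Finset.sum_range_succ, Finset.sum_range_zero, coeff_mul,
    Finset.Nat.sum_antidiagonal_eq_sum_range_succ_mk, coeff_C_add_C_mul_X_pow]
  norm_num [coeff_X_pow, coeff_C, coeff_X, coeff_C_mul, Nat.choose]
  ring
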